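/- arXiv:math-ph/0307027 — 2 statements merged into one kernel-verified Lean document; each statement's English description precedes it below -/
import Mathlib

section
/- Proposition 1 (Crocco-type theorem for Korteweg fluids): For a steady non-isentropic flow of a Korteweg fluid satisfying the steady momentum balance ρ (Dv)v = div T with T = −p̄ I − T^E, the following pointwise relation holds throughout B: ω × v = ϑ grad η − grad h − grad(ι² div(ρ ∂_gφ) + ∂_gφ·grad ι) + ι grad(v·grad Π − ∂_ιχ). -/
noncomputable section

/-- Points of ℝ³. -/
abbrev V3 : Type := Fin 3 → ℝ

/-- Partial derivative ∂ᵢ of a scalar field on ℝ³. -/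
def pd (i : Fin 3) (f : V3 → ℝ) (x : V3) : ℝ :=
  fderiv ℝ f x (Pi.single i 1)

/-- Cross product on ℝ³. -/
def cross (a b : V3) : V3 :=
  ![a 1 * b 2 - a 2 * b 1,
    a 2 * b 0 - a 0 * b 2,
    a 0 * b 1 - a 1 * b 0]

/-- Curl of a vector field on ℝ³. -/
def curl (u : V3 → V3) (x : V3) : V3 :=
  ![pd 1 (fun y => u y 2) x - pd 2 (fun y => u y 1) x,
    pd 2 (fun y => u y 0) x - pd 0 (fun y => u y 2) x,
    pd 0 (fun y => u y 1) x - pd 1 (fun y => u y 0) x]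

/-- A steady Korteweg fluid on an open set `B ⊆ ℝ³`: smooth fields `ρ > 0`
(mass density), `η` (entropy), `v` (velocity), a smooth potential
`φ = φ(ι, g, η)` and a smooth kinetic co-energy `χ = χ(ι, ι̇)`. -/
structure KortewegFluid where
  B : Set V3
  hB : IsOpen B
  ρ : V3 → ℝ
  η : V3 → ℝ
  v : V3 → V3
  φ : ℝ × V3 × ℝ → ℝ
  χ : ℝ × ℝ → ℝ
  hρ : ContDiffOn ℝ (⊤ : ℕ∞) ρ B
  hη : ContDiffOn ℝ (⊤ : ℕ∞) η B
  hv : ContDiffOn ℝ (⊤ : ℕ∞) v B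
  hφ : ContDiff ℝ (⊤ : ℕ∞) φ
  hχ : ContDiff ℝ (⊤ : ℕ∞) χ
  hρpos : ∀ x ∈ B, 0 < ρ x

namespace KortewegFluid

variable (K : KortewegFluid)

/-- Specific volume `ι = 1/ρ`. -/
def ι (x : V3) : ℝ := (K.ρ x)⁻¹

/-- The point `(ι(x), grad ι(x), η(x))` at which `φ` and its partial
derivatives are evaluated. -/
def pt (x : V3) : ℝ × V3 × ℝ := (K.ι x, fun i => pd i K.ι x, K.η x)

/-- `∂_ιφ` evaluated along the fields. -/
def dφι (x : V3) : ℝ := fderiv ℝ K.φ (K.pt x) (1, 0, 0)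

/-- `∂_gφ` (vector of partial derivatives of `φ` w.r.t. the gradient slot)
evaluated along the fields. -/
def dφg (x : V3) : V3 := fun j => fderiv ℝ K.φ (K.pt x) (0, Pi.single j 1, 0)

/-- Temperature `ϑ = ∂_ηφ` evaluated along the fields. -/
def temp (x : V3) : ℝ := fderiv ℝ K.φ (K.pt x) (0, 0, 1)

/-- Convective rate `ι̇ = v · grad ι`. -/
def ιdot (x : V3) : ℝ := ∑ j, K.v x j * pd j K.ι x

/-- `∂_ιχ` evaluated along the fields. -/
def dχι (x : V3) : ℝ := fderiv ℝ K.χ (K.ι x, K.ιdot x) (1, 0)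

/-- The field `Π : x ↦ ∂_ι̇χ(ι(x), ι̇(x))`. -/
def Pi' (x : V3) : ℝ := fderiv ℝ K.χ (K.ι x, K.ιdot x) (0, 1)

/-- `div(ρ ∂_gφ)`. -/
def divρg (x : V3) : ℝ := ∑ j, pd j (fun y => K.ρ y * K.dφg y j) x

/-- Kinetic pressure `p̌ = ρι (v·grad Π) − ∂_ιχ`. -/
def pcheck (x : V3) : ℝ :=
  K.ρ x * K.ι x * (∑ j, K.v x j * pd j K.Pi' x) - K.dχι x

/-- Pressure `p̄ = −ρι ∂_ιφ + ι div(ρ ∂_gφ) − p̌`. -/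
def pbar (x : V3) : ℝ :=
  -(K.ρ x * K.ι x * K.dφι x) + K.ι x * K.divρg x - K.pcheck x

/-- Specific enthalpy `ξ = φ − ι ∂_ιφ − ∂_gφ · grad ι`. -/
def ξ (x : V3) : ℝ :=
  K.φ (K.pt x) - K.ι x * K.dφι x - ∑ j, K.dφg x j * pd j K.ι x

/-- Total enthalpy `h = (1/2)|v|² + ξ`. -/
def htot (x : V3) : ℝ := (1 / 2) * (∑ k, (K.v x k) ^ 2) + K.ξ x

/-- Korteweg stress `T^E = grad ι ⊗ ρ ∂_gφ`. -/
def TE (x : V3) (i j : Fin 3) : ℝ := pd i K.ι x * (K.ρ x * K.dφg x j)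

/-- Steady momentum balance `ρ (Dv)v = div T` with `T = −p̄ I − T^E`
(stated componentwise). -/
def MomentumBalance : Prop :=
  ∀ x ∈ K.B, ∀ i : Fin 3,
    K.ρ x * ∑ j, pd j (fun y => K.v y i) x * K.v x j
      = ∑ j, pd j (fun y => -(K.pbar y) * (if i = j then (1:ℝ) else 0) - K.TE y i j) x

end KortewegFluid

/-!
The momentum balance, divided by `ρ`, expresses the convective acceleration `(Dv)v` through
`grad p̄` and the divergence of the Korteweg stress. Lamb's identity `(Dv)v = ω × v + grad(|v|²/2)`
turns the left side into `ω × v`. On the right, `ρι = 1` reduces `p̄` to `−∂_ιφ + ι div(ρ ∂_gφ) − p̌`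
with `p̌ = v·grad Π − ∂_ιχ`, and the chain rule for `φ(ι, grad ι, η)` gives the Gibbs-type relation
`grad ξ = ϑ grad η − ι grad ∂_ιφ + (Hess ι) ∂_gφ − grad(∂_gφ·grad ι)`. The Hessian term from
`div T^E` cancels against the one in `grad ξ` by the symmetry of `Hess ι`.
-/

open scoped ContDiff Topology

section PartialDerivatives

variable {f g : V3 → ℝ} {x : V3}

theorem pd_eq_of_hasFDerivAt {L : V3 →L[ℝ] ℝ} (h : HasFDerivAt f L x) (i : Fin 3) :
    pd i f x = L (Pi.single i 1) := by
  rw [pd, h.fderiv]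

theorem pd_congr (h : f =ᶠ[𝓝 x] g) (i : Fin 3) : pd i f x = pd i g x := by
  rw [pd, pd, h.fderiv_eq]

theorem pd_add (hf : DifferentiableAt ℝ f x) (hg : DifferentiableAt ℝ g x) (i : Fin 3) :
    pd i (fun y => f y + g y) x = pd i f x + pd i g x :=
  pd_eq_of_hasFDerivAt (hf.hasFDerivAt.add hg.hasFDerivAt) i

theorem pd_sub (hf : DifferentiableAt ℝ f x) (hg : DifferentiableAt ℝ g x) (i : Fin 3) :
    pd i (fun y => f y - g y) x = pd i f x - pd i g x :=
  pd_eq_of_hasFDerivAt (hf.hasFDerivAt.sub hg.hasFDerivAt) i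

theorem pd_neg (i : Fin 3) : pd i (fun y => -f y) x = -pd i f x := by
  rw [pd, pd, fderiv_fun_neg]
  rfl

theorem pd_mul (hf : DifferentiableAt ℝ f x) (hg : DifferentiableAt ℝ g x) (i : Fin 3) :
    pd i (fun y => f y * g y) x = f x * pd i g x + pd i f x * g x := by
  rw [pd, pd, pd, fderiv_fun_mul hf hg]
  simp [mul_comm]

theorem pd_const_mul (hf : DifferentiableAt ℝ f x) (c : ℝ) (i : Fin 3) :
    pd i (fun y => c * f y) x = c * pd i f x :=
  pd_eq_of_hasFDerivAt (hf.hasFDerivAt.const_mul c) i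

theorem pd_mul_const (hf : DifferentiableAt ℝ f x) (c : ℝ) (i : Fin 3) :
    pd i (fun y => f y * c) x = pd i f x * c := by
  simpa only [mul_comm] using pd_const_mul hf c i

theorem pd_sq (hf : DifferentiableAt ℝ f x) (i : Fin 3) :
    pd i (fun y => f y ^ 2) x = 2 * f x * pd i f x := by
  simp only [sq, pd_mul hf hf]
  ring

theorem pd_sum {F : Fin 3 → V3 → ℝ} (hF : ∀ j, DifferentiableAt ℝ (F j) x) (i : Fin 3) :
    pd i (fun y => ∑ j, F j y) x = ∑ j, pd i (F j) x := by
  rw [pd, fderiv_fun_sum fun j _ => hF j]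
  simp [pd]

theorem ContDiffAt.pd {m n : WithTop ℕ∞} (hf : ContDiffAt ℝ n f x) (hmn : m + 1 ≤ n)
    (j : Fin 3) : ContDiffAt ℝ m (pd j f) x :=
  (hf.fderiv_right hmn).clm_apply contDiffAt_const

theorem pd_pd_comm (hf : ContDiffAt ℝ 2 f x) (i j : Fin 3) :
    pd i (pd j f) x = pd j (pd i f) x := by
  have hsymm : IsSymmSndFDerivAt ℝ f x :=
    hf.isSymmSndFDerivAt (by simp [minSmoothness_of_isRCLikeNormedField])
  have hdiff : DifferentiableAt ℝ (fderiv ℝ f) x :=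
    (hf.fderiv_right (m := 1) le_rfl).differentiableAt one_ne_zero
  have hsnd : ∀ a b : Fin 3,
      pd a (pd b f) x = fderiv ℝ (fderiv ℝ f) x (Pi.single a 1) (Pi.single b 1) := by
    intro a b
    change fderiv ℝ (fun y => fderiv ℝ f y (Pi.single b 1)) x (Pi.single a 1) = _
    rw [fderiv_clm_apply hdiff (differentiableAt_const _)]
    simp
  rw [hsnd, hsnd, hsymm]

theorem ContinuousLinearMap.apply_prod_pi_prod {n : Type*} [Fintype n] [DecidableEq n]
    (L : ℝ × (n → ℝ) × ℝ →L[ℝ] ℝ) (a : ℝ) (b : n → ℝ) (c : ℝ) :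
    L (a, b, c) = a * L (1, 0, 0) + ∑ j, b j * L (0, Pi.single j 1, 0) + c * L (0, 0, 1) := by
  have hdecomp : ((a, b, c) : ℝ × (n → ℝ) × ℝ)
      = a • (1, 0, 0) + ∑ j, b j • ((0 : ℝ), (Pi.single j 1 : n → ℝ), (0 : ℝ))
        + c • (0, 0, 1) := by
    refine Prod.ext ?_ (Prod.ext ?_ ?_) <;> simp [Prod.fst_sum, Prod.snd_sum]
    exact pi_eq_sum_univ' b
  rw [hdecomp]
  simp only [map_add, map_sum, map_smul, smul_eq_mul]

theorem pd_comp_prod {F : ℝ × V3 × ℝ → ℝ} {a c : V3 → ℝ} {b : V3 → V3}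
    (hF : DifferentiableAt ℝ F (a x, b x, c x)) (ha : DifferentiableAt ℝ a x)
    (hb : ∀ j, DifferentiableAt ℝ (fun y => b y j) x) (hc : DifferentiableAt ℝ c x)
    (i : Fin 3) :
    pd i (fun y => F (a y, b y, c y)) x
      = pd i a x * fderiv ℝ F (a x, b x, c x) (1, 0, 0)
        + ∑ j, pd i (fun y => b y j) x * fderiv ℝ F (a x, b x, c x) (0, Pi.single j 1, 0)
        + pd i c x * fderiv ℝ F (a x, b x, c x) (0, 0, 1) := by
  have hb' : HasFDerivAt b (ContinuousLinearMap.pi fun j => fderiv ℝ (fun y => b y j) x) x :=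
    hasFDerivAt_pi.2 fun j => (hb j).hasFDerivAt
  have hcomp : HasFDerivAt (fun y => F (a y, b y, c y)) _ x :=
    hF.hasFDerivAt.comp x (ha.hasFDerivAt.prodMk (hb'.prodMk hc.hasFDerivAt))
  rw [pd_eq_of_hasFDerivAt hcomp i]
  exact ContinuousLinearMap.apply_prod_pi_prod _ _ _ _

end PartialDerivatives

theorem ContDiff.contDiffAt_fderiv_comp_apply {E F G : Type*} [NormedAddCommGroup E]
    [NormedSpace ℝ E] [NormedAddCommGroup F] [NormedSpace ℝ F] [NormedAddCommGroup G]
    [NormedSpace ℝ G] {Φ : F → G} {g : E → F} {x : E} {m n : WithTop ℕ∞}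
    (hΦ : ContDiff ℝ n Φ) (hg : ContDiffAt ℝ m g x) (hmn : m + 1 ≤ n) (w : F) :
    ContDiffAt ℝ m (fun y => fderiv ℝ Φ (g y) w) x :=
  (((hΦ.fderiv_right hmn).contDiffAt).comp x hg).clm_apply contDiffAt_const

theorem cross_curl_self_apply (u : V3 → V3) (x : V3) (i : Fin 3) :
    cross (curl u x) (u x) i
      = ∑ j, pd j (fun y => u y i) x * u x j - ∑ j, u x j * pd i (fun y => u y j) x := by
  fin_cases i <;> simp [cross, curl, Fin.sum_univ_three] <;> ring

namespace KortewegFluid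

variable {K : KortewegFluid} {x : V3}

theorem ρ_mul_ι (hx : x ∈ K.B) : K.ρ x * K.ι x = 1 :=
  mul_inv_cancel₀ (K.hρpos x hx).ne'

theorem contDiffAt_ρ (hx : x ∈ K.B) : ContDiffAt ℝ ∞ K.ρ x :=
  K.hρ.contDiffAt (K.hB.mem_nhds hx)

theorem contDiffAt_η (hx : x ∈ K.B) : ContDiffAt ℝ ∞ K.η x :=
  K.hη.contDiffAt (K.hB.mem_nhds hx)

theorem contDiffAt_v_apply (hx : x ∈ K.B) (k : Fin 3) : ContDiffAt ℝ ∞ (fun y => K.v y k) x :=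
  contDiffAt_pi.1 (K.hv.contDiffAt (K.hB.mem_nhds hx)) k

theorem contDiffAt_ι (hx : x ∈ K.B) : ContDiffAt ℝ ∞ K.ι x :=
  (contDiffAt_ρ hx).inv (K.hρpos x hx).ne'

theorem contDiffAt_pd_ι (hx : x ∈ K.B) (j : Fin 3) : ContDiffAt ℝ ∞ (pd j K.ι) x :=
  (contDiffAt_ι hx).pd (by simp) j

theorem contDiffAt_pt (hx : x ∈ K.B) : ContDiffAt ℝ ∞ K.pt x :=
  (contDiffAt_ι hx).prodMk ((contDiffAt_pi.2 (contDiffAt_pd_ι hx)).prodMk (contDiffAt_η hx))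

theorem contDiffAt_dφι (hx : x ∈ K.B) : ContDiffAt ℝ ∞ K.dφι x :=
  K.hφ.contDiffAt_fderiv_comp_apply (contDiffAt_pt hx) (by simp) _

theorem contDiffAt_dφg_apply (hx : x ∈ K.B) (j : Fin 3) :
    ContDiffAt ℝ ∞ (fun y => K.dφg y j) x :=
  K.hφ.contDiffAt_fderiv_comp_apply (contDiffAt_pt hx) (by simp) _

theorem contDiffAt_dφg_dot_grad_ι (hx : x ∈ K.B) :
    ContDiffAt ℝ ∞ (fun y => ∑ j, K.dφg y j * pd j K.ι y) x :=
  ContDiffAt.sum fun j _ => (contDiffAt_dφg_apply hx j).mul (contDiffAt_pd_ι hx j)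

theorem contDiffAt_ι_ιdot (hx : x ∈ K.B) : ContDiffAt ℝ ∞ (fun y => (K.ι y, K.ιdot y)) x :=
  (contDiffAt_ι hx).prodMk
    (ContDiffAt.sum fun j _ => (contDiffAt_v_apply hx j).mul (contDiffAt_pd_ι hx j))

theorem contDiffAt_v_dot_grad_Pi'_sub_dχι (hx : x ∈ K.B) :
    ContDiffAt ℝ ∞ (fun y => (∑ j, K.v y j * pd j K.Pi' y) - K.dχι y) x := by
  have hPi : ContDiffAt ℝ ∞ K.Pi' x :=
    K.hχ.contDiffAt_fderiv_comp_apply (contDiffAt_ι_ιdot hx) (by simp) _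
  exact (ContDiffAt.sum fun j _ => (contDiffAt_v_apply hx j).mul (hPi.pd (by simp) j)).sub
    (K.hχ.contDiffAt_fderiv_comp_apply (contDiffAt_ι_ιdot hx) (by simp) _)

theorem contDiffAt_divρg (hx : x ∈ K.B) : ContDiffAt ℝ ∞ K.divρg x :=
  ContDiffAt.sum fun j _ => ((contDiffAt_ρ hx).mul (contDiffAt_dφg_apply hx j)).pd (by simp) j

theorem contDiffAt_ξ (hx : x ∈ K.B) : ContDiffAt ℝ ∞ K.ξ x :=
  ((K.hφ.contDiffAt.comp x (contDiffAt_pt hx)).sub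
    ((contDiffAt_ι hx).mul (contDiffAt_dφι hx))).sub (contDiffAt_dφg_dot_grad_ι hx)

theorem pbar_eventuallyEq (hx : x ∈ K.B) :
    K.pbar =ᶠ[𝓝 x] fun y => -K.dφι y + K.ι y * K.divρg y
      - ((∑ j, K.v y j * pd j K.Pi' y) - K.dχι y) := by
  filter_upwards [K.hB.mem_nhds hx] with y hy
  simp only [pbar, pcheck, ρ_mul_ι hy, one_mul]

theorem contDiffAt_pbar (hx : x ∈ K.B) : ContDiffAt ℝ ∞ K.pbar x :=
  ((contDiffAt_dφι hx).neg.add ((contDiffAt_ι hx).mul (contDiffAt_divρg hx))).sub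
    (contDiffAt_v_dot_grad_Pi'_sub_dχι hx) |>.congr_of_eventuallyEq (pbar_eventuallyEq hx)

theorem pd_pbar (hx : x ∈ K.B) (i : Fin 3) :
    pd i K.pbar x = -pd i K.dφι x + (K.ι x * pd i K.divρg x + pd i K.ι x * K.divρg x)
      - pd i (fun y => (∑ j, K.v y j * pd j K.Pi' y) - K.dχι y) x := by
  have hι := (contDiffAt_ι hx).differentiableAt (by simp)
  have hdiv := (contDiffAt_divρg hx).differentiableAt (by simp)
  have hdφι := (contDiffAt_dφι hx).differentiableAt (by simp)
  have hkin := (contDiffAt_v_dot_grad_Pi'_sub_dχι hx).differentiableAt (by simp)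
  rw [pd_congr (pbar_eventuallyEq hx) i, pd_sub, pd_add, pd_neg, pd_mul hι hdiv]
  all_goals fun_prop

theorem sum_pd_stress (hx : x ∈ K.B) (i : Fin 3) :
    ∑ j, pd j (fun y => -K.pbar y * (if i = j then (1 : ℝ) else 0) - K.TE y i j) x
      = -pd i K.pbar x - pd i K.ι x * K.divρg x
        - K.ρ x * ∑ j, pd j (pd i K.ι) x * K.dφg x j := by
  have hstress : ∀ j, pd j (fun y => -K.pbar y * (if i = j then (1 : ℝ) else 0) - K.TE y i j) x
      = -pd j K.pbar x * (if i = j then 1 else 0)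
        - (pd i K.ι x * pd j (fun y => K.ρ y * K.dφg y j) x
          + K.ρ x * (pd j (pd i K.ι) x * K.dφg x j)) := by
    intro j
    have hpbar := (contDiffAt_pbar hx).differentiableAt (by simp)
    have hgrad := (contDiffAt_pd_ι hx i).differentiableAt (by simp)
    have hρ := (contDiffAt_ρ hx).differentiableAt (by simp)
    have hdφg := (contDiffAt_dφg_apply hx j).differentiableAt (by simp)
    simp only [TE]
    rw [pd_sub, pd_mul_const, pd_neg, pd_mul (f := pd i K.ι)]
    · ring
    all_goals fun_prop
  rw [Finset.sum_congr rfl fun j _ => hstress j]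
  simp only [Finset.sum_sub_distrib, Finset.sum_add_distrib, mul_ite, mul_one, mul_zero,
    Finset.sum_ite_eq, Finset.mem_univ, if_true, ← Finset.mul_sum, divρg]
  ring

theorem MomentumBalance.convective_accel (hbal : K.MomentumBalance) (hx : x ∈ K.B)
    (i : Fin 3) :
    ∑ j, pd j (fun y => K.v y i) x * K.v x j
      = -(K.ι x * pd i K.pbar x) - K.ι x * pd i K.ι x * K.divρg x
        - ∑ j, pd i (pd j K.ι) x * K.dφg x j := by
  have hbal_i := hbal x hx i
  rw [sum_pd_stress hx i] at hbal_i
  have hhess : ∑ j, pd j (pd i K.ι) x * K.dφg x j = ∑ j, pd i (pd j K.ι) x * K.dφg x j :=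
    Finset.sum_congr rfl fun j _ => by
      rw [pd_pd_comm ((contDiffAt_ι hx).of_le (by decide))]
  rw [hhess] at hbal_i
  linear_combination K.ι x * hbal_i
    - (∑ j, pd j (fun y => K.v y i) x * K.v x j + ∑ j, pd i (pd j K.ι) x * K.dφg x j)
      * ρ_mul_ι hx

theorem pd_ξ (hx : x ∈ K.B) (i : Fin 3) :
    pd i K.ξ x = K.temp x * pd i K.η x - K.ι x * pd i K.dφι x
      + ∑ j, pd i (pd j K.ι) x * K.dφg x j
      - pd i (fun y => ∑ j, K.dφg y j * pd j K.ι y) x := by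
  have hι := (contDiffAt_ι hx).differentiableAt (by simp)
  have hdφι := (contDiffAt_dφι hx).differentiableAt (by simp)
  have hφpt : DifferentiableAt ℝ (fun y => K.φ (K.pt y)) x :=
    (K.hφ.contDiffAt.comp x (contDiffAt_pt hx)).differentiableAt (by simp)
  have hS := (contDiffAt_dφg_dot_grad_ι hx).differentiableAt (by simp)
  have hchain : pd i (fun y => K.φ (K.pt y)) x
      = pd i K.ι x * K.dφι x + ∑ j, pd i (pd j K.ι) x * K.dφg x j
        + pd i K.η x * K.temp x :=
    pd_comp_prod (K.hφ.differentiable (by simp) _) hι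
      (fun j => (contDiffAt_pd_ι hx j).differentiableAt (by simp))
      ((contDiffAt_η hx).differentiableAt (by simp)) i
  change pd i (fun y => K.φ (K.pt y) - K.ι y * K.dφι y
    - ∑ j, K.dφg y j * pd j K.ι y) x = _
  rw [pd_sub, pd_sub, pd_mul hι hdφι, hchain]
  · ring
  all_goals fun_prop

theorem pd_htot (hx : x ∈ K.B) (i : Fin 3) :
    pd i K.htot x = ∑ k, K.v x k * pd i (fun y => K.v y k) x + pd i K.ξ x := by
  have hv k := (contDiffAt_v_apply hx k).differentiableAt (by simp)
  have hsq : ∀ k, pd i (fun y => K.v y k ^ 2) x = 2 * K.v x k * pd i (fun y => K.v y k) x :=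
    fun k => pd_sq (hv k) i
  have hnorm : DifferentiableAt ℝ (fun y => ∑ k, K.v y k ^ 2) x :=
    DifferentiableAt.fun_sum fun k _ => (hv k).pow 2
  have hξ := (contDiffAt_ξ hx).differentiableAt (by simp)
  change pd i (fun y => 1 / 2 * ∑ k, K.v y k ^ 2 + K.ξ y) x = _
  rw [pd_add, pd_const_mul hnorm, pd_sum]
  · simp only [hsq, Finset.mul_sum]
    congr 1
    exact Finset.sum_congr rfl fun k _ => by ring
  all_goals fun_prop

theorem pd_ι_sq_mul_divρg_add_dφg_dot_grad_ι (hx : x ∈ K.B) (i : Fin 3) :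
    pd i (fun y => K.ι y ^ 2 * K.divρg y + ∑ j, K.dφg y j * pd j K.ι y) x
      = K.ι x ^ 2 * pd i K.divρg x + 2 * K.ι x * pd i K.ι x * K.divρg x
        + pd i (fun y => ∑ j, K.dφg y j * pd j K.ι y) x := by
  have hι := (contDiffAt_ι hx).differentiableAt (by simp)
  have hdiv := (contDiffAt_divρg hx).differentiableAt (by simp)
  have hS := (contDiffAt_dφg_dot_grad_ι hx).differentiableAt (by simp)
  rw [pd_add ((hι.fun_pow 2).fun_mul hdiv) hS, pd_mul (hι.fun_pow 2) hdiv, pd_sq hι]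

end KortewegFluid

/-- Proposition 1, Crocco-type theorem for Korteweg fluids:
for a steady non-isentropic flow of a Korteweg fluid satisfying the steady
momentum balance `ρ (Dv)v = div T`, `T = −p̄ I − T^E`, at every point of `B`
(componentwise):
`ω × v = ϑ grad η − grad h − grad(ι² div(ρ ∂_gφ) + ∂_gφ·grad ι)`
`        + ι grad(v·grad Π − ∂_ιχ)`. -/
theorem korteweg_crocco (K : KortewegFluid) (hbal : K.MomentumBalance) :
    ∀ x ∈ K.B, ∀ i : Fin 3,
      cross (curl K.v x) (K.v x) i
        = K.temp x * pd i K.η x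
          - pd i K.htot x
          - pd i (fun y => (K.ι y) ^ 2 * K.divρg y + ∑ j, K.dφg y j * pd j K.ι y) x
          + K.ι x * pd i (fun y => (∑ j, K.v y j * pd j K.Pi' y) - K.dχι y) x := by
  intro x hx i
  rw [cross_curl_self_apply, hbal.convective_accel hx i, KortewegFluid.pd_pbar hx i,
    KortewegFluid.pd_htot hx i, KortewegFluid.pd_ξ hx i,
    KortewegFluid.pd_ι_sq_mul_divρg_add_dφg_dot_grad_ι hx i]
  ring
end
end

section
/- Conservation criterion for vorticity in two-dimensional incompressible flows of complex fluids: let B ⊆ ℝ³ be open, ρ₀ > 0 a constant, and let v : ℝ × B → ℝ³, p : ℝ × B → ℝ, E : ℝ × B → ℝ^{3×3} be smooth time-dependent fields with div v(t,·) = 0 for every t, satisfying the momentum balance ρ₀(∂_t v + (Dv)v) = div(−p I − E), with the third component of v vanishing identically and v, p, E independent of the third spatial coordinate x₃. If there exists a smooth scalar field π : ℝ × B → ℝ such that grad π(t,·) = div E(t,·) for every t, then the vorticity ω = curl v is materially conserved: ∂_t ω + (v·grad)ω = 0 at every point. -/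
noncomputable section

/-!
All derivatives are taken jointly in `(t, x) ∈ ℝ × ℝ³`, where second derivatives of smooth
functions are symmetric. Since `grad π = div E`, the momentum balance says
`ρ₀ Dv/Dt = -grad (p + π)`: the acceleration is a gradient. A directional derivative commutes
with the material derivative up to a term quadratic in `Dv`, and the curl of a gradient vanishes,
so `Dω/Dt` equals that quadratic term; for a planar flow it is `-ω div v = 0`.
-/

open Filter Topology

section MaterialDerivative

variable {E : Type*} [NormedAddCommGroup E] [NormedSpace ℝ E] {n : ℕ}

def materialDeriv (u : Fin n → E → ℝ) (τ : E) (e : Fin n → E) (f : E → ℝ) (z : E) : ℝ :=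
  fderiv ℝ f z τ + ∑ j, u j z * fderiv ℝ f z (e j)

def vorticity (u : Fin n → E → ℝ) (e : Fin n → E) (i k : Fin n) (z : E) : ℝ :=
  fderiv ℝ (u k) z (e i) - fderiv ℝ (u i) z (e k)

variable {u : Fin n → E → ℝ} {τ : E} {e : Fin n → E} {f g : E → ℝ} {z : E}

lemma hasFDerivAt_fderiv_apply (hf : ContDiffAt ℝ 2 f z) (w : E) :
    HasFDerivAt (fun z' => fderiv ℝ f z' w) ((fderiv ℝ (fderiv ℝ f) z).flip w) z := by
  have hd : DifferentiableAt ℝ (fderiv ℝ f) z :=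
    (hf.fderiv_right (m := 1) (by norm_num)).differentiableAt one_ne_zero
  simpa using hd.hasFDerivAt.clm_apply (hasFDerivAt_const w z)

lemma materialDeriv_sub (hf : DifferentiableAt ℝ f z) (hg : DifferentiableAt ℝ g z) :
    materialDeriv u τ e (f - g) z = materialDeriv u τ e f z - materialDeriv u τ e g z := by
  simp only [materialDeriv, fderiv_sub hf hg, sub_apply, mul_sub, Finset.sum_sub_distrib]
  ring

lemma fderiv_materialDeriv_apply (hf : ContDiffAt ℝ 2 f z)
    (hu : ∀ j, DifferentiableAt ℝ (u j) z) (w : E) :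
    fderiv ℝ (materialDeriv u τ e f) z w
      = materialDeriv u τ e (fun z' => fderiv ℝ f z' w) z
        + ∑ j, fderiv ℝ (u j) z w * fderiv ℝ f z (e j) := by
  have hsymm := hf.isSymmSndFDerivAt (by simp)
  have hL : HasFDerivAt (materialDeriv u τ e f)
      ((fderiv ℝ (fderiv ℝ f) z).flip τ + ∑ j, (u j z • (fderiv ℝ (fderiv ℝ f) z).flip (e j)
        + fderiv ℝ f z (e j) • fderiv ℝ (u j) z)) z :=
    (hasFDerivAt_fderiv_apply hf τ).add (HasFDerivAt.fun_sum fun j _ =>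
      (hu j).hasFDerivAt.mul (hasFDerivAt_fderiv_apply hf (e j)))
  rw [hL.fderiv, materialDeriv, (hasFDerivAt_fderiv_apply hf w).fderiv]
  simp [hsymm w, Finset.sum_add_distrib, mul_comm, add_assoc]

lemma differentiableAt_vorticity (hu : ∀ j, ContDiffAt ℝ 2 (u j) z) (i k : Fin n) :
    DifferentiableAt ℝ (vorticity u e i k) z :=
  ((hasFDerivAt_fderiv_apply (hu k) (e i)).sub
    (hasFDerivAt_fderiv_apply (hu i) (e k))).differentiableAt

lemma materialDeriv_vorticity (hu : ∀ j, ContDiffAt ℝ 2 (u j) z) (i k : Fin n) :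
    materialDeriv u τ e (vorticity u e i k) z
      = fderiv ℝ (materialDeriv u τ e (u k)) z (e i) - fderiv ℝ (materialDeriv u τ e (u i)) z (e k)
        - ∑ j, (fderiv ℝ (u j) z (e i) * fderiv ℝ (u k) z (e j)
          - fderiv ℝ (u j) z (e k) * fderiv ℝ (u i) z (e j)) := by
  have hdu : ∀ j, DifferentiableAt ℝ (u j) z := fun j => (hu j).differentiableAt two_ne_zero
  rw [show vorticity u e i k
      = (fun z => fderiv ℝ (u k) z (e i)) - (fun z => fderiv ℝ (u i) z (e k)) from rfl,
    materialDeriv_sub (hasFDerivAt_fderiv_apply (hu k) (e i)).differentiableAt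
      (hasFDerivAt_fderiv_apply (hu i) (e k)).differentiableAt,
    fderiv_materialDeriv_apply (hu k) hdu, fderiv_materialDeriv_apply (hu i) hdu,
    Finset.sum_sub_distrib]
  ring

lemma fderiv_materialDeriv_apply_comm {q : E → ℝ} {ρ : ℝ} (hρ : ρ ≠ 0)
    (hq : ContDiffAt ℝ 2 q z)
    (hmom : ∀ i, ∀ᶠ z' in 𝓝 z, ρ * materialDeriv u τ e (u i) z' + fderiv ℝ q z' (e i) = 0)
    (i k : Fin n) :
    fderiv ℝ (materialDeriv u τ e (u k)) z (e i)
      = fderiv ℝ (materialDeriv u τ e (u i)) z (e k) := by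
  have hacc : ∀ k, HasFDerivAt (materialDeriv u τ e (u k))
      (-ρ⁻¹ • (fderiv ℝ (fderiv ℝ q) z).flip (e k)) z := by
    intro k
    refine ((hasFDerivAt_fderiv_apply hq (e k)).const_mul (-ρ⁻¹)).congr_of_eventuallyEq ?_
    filter_upwards [hmom k] with z' hz'
    field_simp
    linarith
  simp only [(hacc _).fderiv, smul_apply, ContinuousLinearMap.flip_apply,
    hq.isSymmSndFDerivAt (by simp) (e i)]

theorem materialDeriv_vorticity_eq_zero_of_planar {u : Fin 3 → E → ℝ} {e : Fin 3 → E}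
    {q : E → ℝ} {ρ : ℝ} (hρ : ρ ≠ 0) (hu : ∀ j, ContDiffAt ℝ 2 (u j) z) (hq : ContDiffAt ℝ 2 q z)
    (hmom : ∀ i, ∀ᶠ z' in 𝓝 z, ρ * materialDeriv u τ e (u i) z' + fderiv ℝ q z' (e i) = 0)
    (hplanar : u 2 = 0) (hdiv : ∑ j, fderiv ℝ (u j) z (e j) = 0) :
    materialDeriv u τ e (vorticity u e 0 1) z = 0 := by
  rw [materialDeriv_vorticity hu, fderiv_materialDeriv_apply_comm hρ hq hmom 0 1]
  simp only [Fin.sum_univ_three, hplanar, Pi.zero_apply, fderiv_zero, zero_apply] at hdiv ⊢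
  linear_combination (fderiv ℝ (u 0) z (e 1) - fderiv ℝ (u 1) z (e 0)) * hdiv

end MaterialDerivative

lemma fderiv_apply_eq_zero_of_forall_add_smul {E : Type*} [NormedAddCommGroup E]
    [NormedSpace ℝ E] {f : E → ℝ} {y w : E} (hf : ∀ s : ℝ, f (y + s • w) = f y) :
    fderiv ℝ f y w = 0 := by
  by_cases hd : DifferentiableAt ℝ f y
  · rw [← hd.lineDeriv_eq_fderiv, lineDeriv, funext hf, deriv_const]
  · rw [fderiv_zero_of_not_differentiableAt hd, zero_apply]

lemma curl_eq_of_planar {u : V3 → V3} (h2 : ∀ y, u y 2 = 0)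
    (h3 : ∀ x y : V3, x 0 = y 0 → x 1 = y 1 → u x = u y) (y : V3) :
    curl u y = ![0, 0, pd 0 (fun y => u y 1) y - pd 1 (fun y => u y 0) y] := by
  have hpd2 : ∀ i, fderiv ℝ (fun y => u y i) y (Pi.single 2 1) = 0 := fun i =>
    fderiv_apply_eq_zero_of_forall_add_smul fun s =>
      congrFun (h3 _ _ (by simp) (by simp)) i
  have hu2 : (fun y => u y 2) = 0 := funext h2
  ext i
  fin_cases i <;> simp [curl, hpd2, hu2, pd]

def timeDir : ℝ × V3 := (1, 0)

def spaceDir (j : Fin 3) : ℝ × V3 := (0, Pi.single j 1)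

section Slices

variable {f : ℝ × V3 → ℝ} {t : ℝ} {x : V3}

lemma DifferentiableAt.slice (hf : DifferentiableAt ℝ f (t, x)) :
    DifferentiableAt ℝ (fun y => f (t, y)) x :=
  hf.comp x ((differentiableAt_const t).prodMk differentiableAt_id)

lemma pd_eq_fderiv_spaceDir (hf : DifferentiableAt ℝ f (t, x)) (j : Fin 3) :
    pd j (fun y => f (t, y)) x = fderiv ℝ f (t, x) (spaceDir j) := by
  have h : HasFDerivAt (fun y : V3 => f (t, y))
      ((fderiv ℝ f (t, x)).comp ((0 : V3 →L[ℝ] ℝ).prod (ContinuousLinearMap.id ℝ V3))) x :=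
    hf.hasFDerivAt.comp x ((hasFDerivAt_const t x).prodMk (hasFDerivAt_id x))
  simp [pd, h.fderiv, spaceDir]

lemma deriv_eq_fderiv_timeDir (hf : DifferentiableAt ℝ f (t, x)) :
    deriv (fun s => f (s, x)) t = fderiv ℝ f (t, x) timeDir :=
  (hf.hasFDerivAt.comp_hasDerivAt t ((hasDerivAt_id t).prodMk (hasDerivAt_const t x))).deriv

lemma deriv_add_sum_pd_eq_materialDeriv {G : ℝ → V3 → ℝ} {B : Set V3} (hB : B ∈ 𝓝 x)
    (hG : ∀ s, ∀ y ∈ B, G s y = f (s, y)) (hf : DifferentiableAt ℝ f (t, x))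
    (u : Fin 3 → ℝ × V3 → ℝ) :
    deriv (fun s => G s x) t + ∑ j, u j (t, x) * pd j (G t) x
      = materialDeriv u timeDir spaceDir f (t, x) := by
  have hGt : G t =ᶠ[𝓝 x] fun y => f (t, y) := by
    filter_upwards [hB] with y hy using hG t y hy
  have hGx : (fun s => G s x) = fun s => f (s, x) := funext fun s => hG s x (mem_of_mem_nhds hB)
  have hpd : ∀ j, pd j (G t) x = fderiv ℝ f (t, x) (spaceDir j) := fun j => by
    rw [← pd_eq_fderiv_spaceDir hf, pd, pd, hGt.fderiv_eq]
  simp only [hGx, hpd, deriv_eq_fderiv_timeDir hf, materialDeriv]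

end Slices

lemma sum_pd_neg_mul_ite_sub {P : V3 → ℝ} {S : V3 → Fin 3 → ℝ} {x : V3}
    (hP : DifferentiableAt ℝ P x) (hS : ∀ j, DifferentiableAt ℝ (fun y => S y j) x) (i : Fin 3) :
    ∑ j, pd j (fun y => -(P y) * (if i = j then (1:ℝ) else 0) - S y j) x
      = -pd i P x - ∑ j, pd j (fun y => S y j) x := by
  have hterm : ∀ j, pd j (fun y => -(P y) * (if i = j then (1:ℝ) else 0) - S y j) x
      = -(if i = j then pd j P x else 0) - pd j (fun y => S y j) x := by
    intro j
    have hd := ((hP.hasFDerivAt.fun_neg.mul_const (if i = j then (1:ℝ) else 0)).fun_sub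
      (hS j).hasFDerivAt).fderiv
    rw [pd, hd]
    split_ifs <;> simp [pd]
  rw [Finset.sum_congr rfl fun j _ => hterm j]
  simp [Finset.sum_sub_distrib]

lemma curl_apply_two_eq_vorticity {v : ℝ × V3 → V3} {s : ℝ} {y : V3}
    (h2 : ∀ y, v (s, y) 2 = 0) (h3 : ∀ x y : V3, x 0 = y 0 → x 1 = y 1 → v (s, x) = v (s, y))
    (hv : ∀ j, DifferentiableAt ℝ (fun z => v z j) (s, y)) :
    curl (fun w => v (s, w)) y 2 = vorticity (fun j z => v z j) spaceDir 0 1 (s, y) := by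
  simp [curl_eq_of_planar h2 h3, vorticity, pd_eq_fderiv_spaceDir (hv _)]

lemma mul_materialDeriv_add_fderiv_eq_zero_of_balance {ρ₀ : ℝ} {v : ℝ × V3 → V3}
    {p π : ℝ × V3 → ℝ} {E : ℝ × V3 → Fin 3 → Fin 3 → ℝ} {t : ℝ} {x : V3} {i : Fin 3}
    (hv : DifferentiableAt ℝ (fun z => v z i) (t, x)) (hp : DifferentiableAt ℝ p (t, x))
    (hπ : DifferentiableAt ℝ π (t, x)) (hE : ∀ j, DifferentiableAt ℝ (fun z => E z i j) (t, x))
    (hbal : ρ₀ * (deriv (fun s => v (s, x) i) t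
        + ∑ j, pd j (fun y => v (t, y) i) x * v (t, x) j)
      = ∑ j, pd j (fun y => -(p (t, y)) * (if i = j then (1:ℝ) else 0) - E (t, y) i j) x)
    (hgrad : pd i (fun y => π (t, y)) x = ∑ j, pd j (fun w => E (t, w) i j) x) :
    ρ₀ * materialDeriv (fun j z => v z j) timeDir spaceDir (fun z => v z i) (t, x)
      + fderiv ℝ (p + π) (t, x) (spaceDir i) = 0 := by
  rw [sum_pd_neg_mul_ite_sub hp.slice (fun j => (hE j).slice), ← hgrad,
    deriv_eq_fderiv_timeDir hv, pd_eq_fderiv_spaceDir hp, pd_eq_fderiv_spaceDir hπ] at hbal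
  simp only [pd_eq_fderiv_spaceDir hv, mul_comm _ (v (t, x) _)] at hbal
  rw [materialDeriv, fderiv_add hp hπ, add_apply]
  linear_combination hbal

theorem twoDimensional_vorticity_conservation_criterion_general
    (B : Set V3) (hB : IsOpen B)
    (ρ₀ : ℝ) (hρ₀ : 0 < ρ₀)
    (v : ℝ × V3 → V3) (p : ℝ × V3 → ℝ) (E : ℝ × V3 → Fin 3 → Fin 3 → ℝ)
    (hv : ContDiffOn ℝ (⊤ : ℕ∞) v (Set.univ ×ˢ B))
    (hp : ContDiffOn ℝ (⊤ : ℕ∞) p (Set.univ ×ˢ B))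
    (hE : ContDiffOn ℝ (⊤ : ℕ∞) E (Set.univ ×ˢ B))
    (hincomp : ∀ t : ℝ, ∀ x ∈ B, (∑ j, pd j (fun y => v (t, y) j) x) = 0)
    (balance : ∀ t : ℝ, ∀ x ∈ B, ∀ i : Fin 3,
      ρ₀ * (deriv (fun s => v (s, x) i) t
              + ∑ j, pd j (fun y => v (t, y) i) x * v (t, x) j)
        = ∑ j, pd j (fun y => -(p (t, y)) * (if i = j then (1:ℝ) else 0) - E (t, y) i j) x)
    (h2d : ∀ t : ℝ, ∀ x : V3, v (t, x) 2 = 0)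
    (hv3 : ∀ t : ℝ, ∀ x y : V3, x 0 = y 0 → x 1 = y 1 → v (t, x) = v (t, y))
    (π : ℝ × V3 → ℝ)
    (hπ : ContDiffOn ℝ (⊤ : ℕ∞) π (Set.univ ×ˢ B))
    (hgradπ : ∀ t : ℝ, ∀ x ∈ B, ∀ i : Fin 3,
      pd i (fun y => π (t, y)) x = ∑ j, pd j (fun w => E (t, w) i j) x) :
    ∀ t : ℝ, ∀ x ∈ B, ∀ i : Fin 3,
      deriv (fun s => curl (fun y => v (s, y)) x i) t
        + (∑ j, v (t, x) j * pd j (fun y => curl (fun w => v (t, w)) y i) x)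
      = 0 := by
  set U : Set (ℝ × V3) := Set.univ ×ˢ B
  have hU : IsOpen U := isOpen_univ.prod hB
  have smooth : ∀ {f : ℝ × V3 → ℝ}, ContDiffOn ℝ (⊤ : ℕ∞) f U → ∀ z ∈ U, ContDiffAt ℝ 2 f z :=
    fun hf z hz => (hf.contDiffAt (hU.mem_nhds hz)).of_le (WithTop.coe_le_coe.mpr le_top)
  have diff : ∀ {f : ℝ × V3 → ℝ}, ContDiffOn ℝ (⊤ : ℕ∞) f U → ∀ z ∈ U, DifferentiableAt ℝ f z :=
    fun hf z hz => (smooth hf z hz).differentiableAt two_ne_zero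
  have hvi : ∀ i, ContDiffOn ℝ (⊤ : ℕ∞) (fun z => v z i) U := contDiffOn_pi.1 hv
  have hmom : ∀ z ∈ U, ∀ i,
      ρ₀ * materialDeriv (fun j z => v z j) timeDir spaceDir (fun z => v z i) z
        + fderiv ℝ (p + π) z (spaceDir i) = 0 := by
    rintro ⟨t, x⟩ hz i
    exact mul_materialDeriv_add_fderiv_eq_zero_of_balance (diff (hvi i) _ hz) (diff hp _ hz)
      (diff hπ _ hz) (fun j => diff (contDiffOn_pi.1 (contDiffOn_pi.1 hE i) j) _ hz)
      (balance t x hz.2 i) (hgradπ t x hz.2 i)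
  intro t x hx i
  have hz : (t, x) ∈ U := ⟨trivial, hx⟩
  fin_cases i
  · simp [curl_eq_of_planar (h2d _) (hv3 _), pd]
  · simp [curl_eq_of_planar (h2d _) (hv3 _), pd]
  · have hdiv : ∑ j, fderiv ℝ (fun z => v z j) (t, x) (spaceDir j) = 0 := by
      simpa only [pd_eq_fderiv_spaceDir (diff (hvi _) _ hz)] using hincomp t x hx
    refine (deriv_add_sum_pd_eq_materialDeriv (hB.mem_nhds hx) (fun s y hy =>
        curl_apply_two_eq_vorticity (h2d s) (hv3 s) fun j => diff (hvi j) _ ⟨trivial, hy⟩)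
      (differentiableAt_vorticity (fun j => smooth (hvi j) _ hz) 0 1) (fun j z => v z j)).trans ?_
    exact materialDeriv_vorticity_eq_zero_of_planar hρ₀.ne' (fun j => smooth (hvi j) _ hz)
      (smooth (hp.add hπ) _ hz) (fun i => eventually_of_mem (hU.mem_nhds hz) (hmom · · i))
      (funext fun z => h2d z.1 z.2) hdiv

/-- conservation criterion for vorticity in two-dimensional
incompressible flows of complex fluids. Under the hypotheses of the
two-dimensional vorticity transport theorem, if there exists a smooth scalar
field `π` with `grad π(t,·) = div E(t,·)`, then the vorticity is materially
conserved: `∂_t ω + (v·grad)ω = 0` (componentwise) at every point. -/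
theorem twoDimensional_vorticity_conservation_criterion
    (B : Set V3) (hB : IsOpen B)
    (ρ₀ : ℝ) (hρ₀ : 0 < ρ₀)
    (v : ℝ × V3 → V3) (p : ℝ × V3 → ℝ) (E : ℝ × V3 → Fin 3 → Fin 3 → ℝ)
    (hv : ContDiffOn ℝ (⊤ : ℕ∞) v (Set.univ ×ˢ B))
    (hp : ContDiffOn ℝ (⊤ : ℕ∞) p (Set.univ ×ˢ B))
    (hE : ContDiffOn ℝ (⊤ : ℕ∞) E (Set.univ ×ˢ B))
    (hincomp : ∀ t : ℝ, ∀ x ∈ B, (∑ j, pd j (fun y => v (t, y) j) x) = 0)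
    (balance : ∀ t : ℝ, ∀ x ∈ B, ∀ i : Fin 3,
      ρ₀ * (deriv (fun s => v (s, x) i) t
              + ∑ j, pd j (fun y => v (t, y) i) x * v (t, x) j)
        = ∑ j, pd j (fun y => -(p (t, y)) * (if i = j then (1:ℝ) else 0) - E (t, y) i j) x)
    (h2d : ∀ t : ℝ, ∀ x : V3, v (t, x) 2 = 0)
    (hv3 : ∀ t : ℝ, ∀ x y : V3, x 0 = y 0 → x 1 = y 1 → v (t, x) = v (t, y))
    (hp3 : ∀ t : ℝ, ∀ x y : V3, x 0 = y 0 → x 1 = y 1 → p (t, x) = p (t, y))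
    (hE3 : ∀ t : ℝ, ∀ x y : V3, x 0 = y 0 → x 1 = y 1 → E (t, x) = E (t, y))
    (π : ℝ × V3 → ℝ)
    (hπ : ContDiffOn ℝ (⊤ : ℕ∞) π (Set.univ ×ˢ B))
    (hgradπ : ∀ t : ℝ, ∀ x ∈ B, ∀ i : Fin 3,
      pd i (fun y => π (t, y)) x = ∑ j, pd j (fun w => E (t, w) i j) x) :
    ∀ t : ℝ, ∀ x ∈ B, ∀ i : Fin 3,
      deriv (fun s => curl (fun y => v (s, y)) x i) t
        + (∑ j, v (t, x) j * pd j (fun y => curl (fun w => v (t, w)) y i) x)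
      = 0 :=
  twoDimensional_vorticity_conservation_criterion_general B hB ρ₀ hρ₀ v p E hv hp hE hincomp balance
    h2d hv3 π hπ hgradπ
end
end
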